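/- Let (𝔫, ⟨·,·⟩) be a nonabelian metric nilpotent Lie algebra with orthogonal Ricci-diagonal basis B, Gram matrix U = (u_{ij}) and m = |Λ_B| ≥ 2. Suppose that every triple (j,k,l) ∈ Λ_B satisfies l ∉ {j,k} (so each root vector has two entries equal to 1 and one entry equal to −1, the diagonal entries of U equal 3, and the off-diagonal entries of U lie in {−2,−1,0,1,2}). Then for each i = 1, …, m−1: (1) the i-th entry of n_i is positive and the m-th entry of n_i is negative; and (2) the point (0,0,…,0,1) ∈ ℝ^m satisfies (0,…,0,1) · n_i < 0, i.e., it lies in the open half-space H_i⁻ = {v : n_i · v < 0}. -/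

import Mathlib

/-- Structure constants of a Lie algebra relative to a basis `b`:
`⁅b j, b k⁆ = ∑ l, structConst b j k l • b l`. -/
noncomputable def structConst {n : ℕ} {L : Type} [LieRing L] [LieAlgebra ℝ L]
    (b : Module.Basis (Fin n) ℝ L) (j k l : Fin n) : ℝ := b.repr ⁅b j, b k⁆ l

/-- The root vector `y_{jk}^l = e_j + e_k - e_l ∈ ℝⁿ`. -/
noncomputable def rootVector {n : ℕ} (j k l : Fin n) (i : Fin n) : ℝ :=
  (if i = j then (1:ℝ) else 0) + (if i = k then 1 else 0) - (if i = l then 1 else 0)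

/-- The dictionary order on index triples. -/
def dictLt {n : ℕ} (t t' : Fin n × Fin n × Fin n) : Prop :=
  t.1 < t'.1 ∨ (t.1 = t'.1 ∧ (t.2.1 < t'.2.1 ∨ (t.2.1 = t'.2.1 ∧ t.2.2 < t'.2.2)))

/-- `σ : Fin m → (Fin n)³` enumerates, in dictionary order, the set
`Λ_B = {(j,k,l) : α_{jk}^l ≠ 0, j < k}` of index triples of nonzero
structure constants of the Lie algebra relative to the basis `b`
(in particular `m = |Λ_B|`). -/
def IsEnumerationOfLambda {n m : ℕ} {L : Type} [LieRing L] [LieAlgebra ℝ L]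
    (b : Module.Basis (Fin n) ℝ L) (σ : Fin m → Fin n × Fin n × Fin n) : Prop :=
  (∀ t : Fin n × Fin n × Fin n,
      (t.1 < t.2.1 ∧ structConst b t.1 t.2.1 t.2.2 ≠ 0) ↔ (∃ r, σ r = t)) ∧
  (∀ r r' : Fin m, r < r' → dictLt (σ r) (σ r'))

/-- The `m × n` root matrix `Y`, whose `r`-th row is the root vector of the
`r`-th triple of `Λ_B`. -/
noncomputable def rootMatrix {n m : ℕ} (σ : Fin m → Fin n × Fin n × Fin n) :
    Matrix (Fin m) (Fin n) ℝ :=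
  Matrix.of fun r i => rootVector (σ r).1 (σ r).2.1 (σ r).2.2 i

/-- The `m × m` Gram matrix `U = Y Yᵀ`. -/
noncomputable def gramMatrix {n m : ℕ} (σ : Fin m → Fin n × Fin n × Fin n) :
    Matrix (Fin m) (Fin m) ℝ :=
  rootMatrix σ * (rootMatrix σ).transpose

/-- The structure vector: its `r`-th entry is `(q_l/(q_j q_k)) (α_{jk}^l)²`,
where `(j,k,l)` is the `r`-th triple of `Λ_B` and `q_i` are the diagonal
metric coefficients. -/
noncomputable def structVector {n m : ℕ} {L : Type} [LieRing L] [LieAlgebra ℝ L]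
    (b : Module.Basis (Fin n) ℝ L) (σ : Fin m → Fin n × Fin n × Fin n)
    (q : Fin n → ℝ) (r : Fin m) : ℝ :=
  q (σ r).2.2 / (q (σ r).1 * q (σ r).2.1) *
    (structConst b (σ r).1 (σ r).2.1 (σ r).2.2) ^ 2

/-- The Ricci form `ric(x,y) = -(1/2)⟨ad x, ad y⟩ + (1/4)⟨J x, J y⟩`, where the
inner product on endomorphisms is `⟨A, B⟩ = tr (A ∘ B*)`; it is expressed here
through a given adjoint operation `adj` (characterized by
`Q (adj A x) y = Q x (A y)`) and a given map `J` (characterized by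
`Q (J x y) z = Q x ⁅y, z⁆`). -/
noncomputable def ricForm {L : Type} [LieRing L] [LieAlgebra ℝ L]
    (adj : (L →ₗ[ℝ] L) → (L →ₗ[ℝ] L)) (J : L → L →ₗ[ℝ] L) (x y : L) : ℝ :=
  -(1/2) * LinearMap.trace ℝ L ((LieAlgebra.ad ℝ L x) ∘ₗ adj (LieAlgebra.ad ℝ L y))
    + (1/4) * LinearMap.trace ℝ L ((J x) ∘ₗ adj (J y))

/-- The `(m-1) × m` matrix `P` with `P_{ii} = 1`, `P_{im} = -1` and all other
entries `0` (here of size `m × (m+1)`). -/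
noncomputable def Pmat (m : ℕ) : Matrix (Fin m) (Fin (m+1)) ℝ :=
  Matrix.of fun i j => if j = i.castSucc then 1 else if j = Fin.last m then -1 else 0

/-! Under `l ∉ {j, k}` every root vector has entries `1, 1, -1` in three distinct positions, so
every diagonal entry of `U` is `3`. Triples with `j < k` are recovered from their root vectors,
so distinct rows of `Y` are distinct vectors of the same length, and the equality case of
Cauchy–Schwarz makes every off-diagonal entry of `U` smaller than `3`. As `n_i` is row `i` of
`U` minus row `m`, its `i`-th entry is `3 - u_{mi} > 0`, and its last entry, which is also
`(0,…,0,1) · n_i`, is `u_{im} - 3 < 0`. -/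

open Matrix

section DotProduct

variable {ι R : Type*} [Fintype ι] [CommRing R] [LinearOrder R] [IsStrictOrderedRing R]

lemma dotProduct_self_pos_of_ne_zero {v : ι → R} (hv : v ≠ 0) : 0 < v ⬝ᵥ v :=
  (Finset.sum_nonneg fun i _ => mul_self_nonneg (v i)).lt_of_ne'
    (dotProduct_self_eq_zero.not.mpr hv)

lemma dotProduct_lt_of_ne {v w : ι → R} {c : R} (hv : v ⬝ᵥ v = c) (hw : w ⬝ᵥ w = c)
    (hne : v ≠ w) : v ⬝ᵥ w < c := by
  have hpos := dotProduct_self_pos_of_ne_zero (sub_ne_zero.mpr hne)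
  rw [sub_dotProduct, dotProduct_sub, dotProduct_sub, dotProduct_comm w v] at hpos
  linarith

end DotProduct

lemma dictLt_irrefl {n : ℕ} (t : Fin n × Fin n × Fin n) : ¬ dictLt t t := by
  simp [dictLt]

namespace IsEnumerationOfLambda

variable {n m : ℕ} {L : Type} [LieRing L] [LieAlgebra ℝ L] {b : Module.Basis (Fin n) ℝ L}
  {σ : Fin m → Fin n × Fin n × Fin n}

lemma injective (hσ : IsEnumerationOfLambda b σ) : Function.Injective σ := by
  intro r s hrs
  by_contra hne
  rcases lt_or_gt_of_ne hne with h | h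
  · exact dictLt_irrefl _ (hrs ▸ hσ.2 r s h)
  · exact dictLt_irrefl _ (hrs ▸ hσ.2 s r h)

lemma fst_lt_snd (hσ : IsEnumerationOfLambda b σ) (r : Fin m) : (σ r).1 < (σ r).2.1 :=
  ((hσ.1 (σ r)).mpr ⟨r, rfl⟩).1

end IsEnumerationOfLambda

section RootVector

variable {n : ℕ} {j k l j' k' l' : Fin n}

lemma rootVector_eq_single (j k l : Fin n) :
    rootVector j k l = Pi.single j 1 + Pi.single k 1 - Pi.single l 1 := by
  ext i
  simp [rootVector, Pi.single_apply]

lemma rootVector_dotProduct_self (hjk : j ≠ k) (hlj : l ≠ j) (hlk : l ≠ k) :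
    rootVector j k l ⬝ᵥ rootVector j k l = 3 := by
  simp only [rootVector_eq_single, add_dotProduct, sub_dotProduct, dotProduct_add,
    dotProduct_sub, single_dotProduct, Pi.single_apply, hjk, hjk.symm, hlj, hlj.symm, hlk,
    hlk.symm]
  norm_num

-- `l` is the only coordinate equal to `-1`, and `j < k` are the two equal to `1`.
lemma rootVector_injective (hjk : j < k) (hlj : l ≠ j) (hlk : l ≠ k)
    (hjk' : j' < k') (hlj' : l' ≠ j') (hlk' : l' ≠ k')
    (h : rootVector j k l = rootVector j' k' l') : (j, k, l) = (j', k', l') := by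
  have hl_eq := congrFun h l
  have hj_eq := congrFun h j
  have hk_eq := congrFun h k
  have hj'_eq := congrFun h j'
  simp only [rootVector] at hl_eq hj_eq hk_eq hj'_eq
  grind

end RootVector

section GramMatrix

variable {n m : ℕ} {L : Type} [LieRing L] [LieAlgebra ℝ L] {b : Module.Basis (Fin n) ℝ L}
  {σ : Fin m → Fin n × Fin n × Fin n}

lemma gramMatrix_apply_self (hσ : IsEnumerationOfLambda b σ)
    (hl : ∀ r, (σ r).2.2 ≠ (σ r).1 ∧ (σ r).2.2 ≠ (σ r).2.1) (r : Fin m) :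
    gramMatrix σ r r = 3 :=
  rootVector_dotProduct_self (hσ.fst_lt_snd r).ne (hl r).1 (hl r).2

lemma gramMatrix_apply_lt_three (hσ : IsEnumerationOfLambda b σ)
    (hl : ∀ r, (σ r).2.2 ≠ (σ r).1 ∧ (σ r).2.2 ≠ (σ r).2.1) {r s : Fin m} (hrs : r ≠ s) :
    gramMatrix σ r s < 3 :=
  dotProduct_lt_of_ne (v := rootMatrix σ r) (w := rootMatrix σ s)
    (gramMatrix_apply_self hσ hl r) (gramMatrix_apply_self hσ hl s) fun h => hrs <| hσ.injective <| rootVector_injective (hσ.fst_lt_snd r) (hl r).1 (hl r).2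
      (hσ.fst_lt_snd s) (hl s).1 (hl s).2 h

end GramMatrix

lemma Pmat_mul_apply {m : ℕ} {α : Type*} (A : Matrix (Fin (m + 1)) α ℝ) (i : Fin m) (a : α) :
    (Pmat m * A) i a = A i.castSucc a - A (Fin.last m) a := by
  have hne : i.castSucc ≠ Fin.last m := (Fin.castSucc_lt_last i).ne
  rw [Matrix.mul_apply, Fin.sum_univ_castSucc]
  simp [Pmat, Fin.castSucc_inj, hne.symm, sub_eq_add_neg]

theorem stmt5_general
    {n m : ℕ} {L : Type} [LieRing L] [LieAlgebra ℝ L]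
    (b : Module.Basis (Fin n) ℝ L)
    (σ : Fin (m+1) → Fin n × Fin n × Fin n)
    (hσ : IsEnumerationOfLambda b σ)
    -- every triple `(j,k,l)` of `Λ_B` satisfies `l ∉ {j, k}`
    (hl : ∀ r : Fin (m+1), (σ r).2.2 ≠ (σ r).1 ∧ (σ r).2.2 ≠ (σ r).2.1) :
    ∀ i : Fin m,
      0 < (Pmat m * gramMatrix σ) i i.castSucc
      ∧ (Pmat m * gramMatrix σ) i (Fin.last m) < 0
      ∧ ∑ j, (if j = Fin.last m then (1:ℝ) else 0) *
          (Pmat m * gramMatrix σ) i j < 0 := by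
  intro i
  have hi : i.castSucc ≠ Fin.last m := (Fin.castSucc_lt_last i).ne
  have hlast : (Pmat m * gramMatrix σ) i (Fin.last m) < 0 := by
    rw [Pmat_mul_apply, gramMatrix_apply_self hσ hl]
    linarith [gramMatrix_apply_lt_three hσ hl hi]
  refine ⟨?_, hlast, ?_⟩
  · rw [Pmat_mul_apply, gramMatrix_apply_self hσ hl]
    linarith [gramMatrix_apply_lt_three hσ hl hi.symm]
  · simpa only [ite_mul, one_mul, zero_mul, Finset.sum_ite_eq', Finset.mem_univ, if_true]
      using hlast

/-- Let `(𝔫, Q)` be a nonabelian metric nilpotent Lie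
algebra with orthogonal Ricci-diagonal basis `B`, Gram matrix `U` and
`|Λ_B| = m + 1 ≥ 2`.  Suppose every triple `(j,k,l) ∈ Λ_B` satisfies
`l ∉ {j,k}`.  Then for each `i`: (1) the `i`-th entry of `n_i = (P U)_i` is
positive and its last entry is negative, and (2) the point `(0,…,0,1)`
satisfies `(0,…,0,1) · n_i < 0`, i.e. lies in the open half-space `H_i⁻`. -/
theorem stmt5
    {n m : ℕ} (hm : 1 ≤ m) {L : Type} [LieRing L] [LieAlgebra ℝ L]
    [LieRing.IsNilpotent L]
    (Q : L →ₗ[ℝ] L →ₗ[ℝ] ℝ)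
    (hQsymm : ∀ x y, Q x y = Q y x)
    (hQpos : ∀ x, x ≠ 0 → 0 < Q x x)
    (hnonab : ∃ x y : L, ⁅x, y⁆ ≠ 0)
    (b : Module.Basis (Fin n) ℝ L)
    (hb : ∀ i j, i ≠ j → Q (b i) (b j) = 0)
    (σ : Fin (m+1) → Fin n × Fin n × Fin n)
    (hσ : IsEnumerationOfLambda b σ)
    (adj : (L →ₗ[ℝ] L) → (L →ₗ[ℝ] L))
    (hadj : ∀ (A : L →ₗ[ℝ] L) (x y : L), Q (adj A x) y = Q x (A y))
    (J : L → L →ₗ[ℝ] L)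
    (hJ : ∀ x y z, Q (J x y) z = Q x ⁅y, z⁆)
    (hdiag : ∀ i j, i ≠ j → ricForm adj J (b i) (b j) = 0)
    -- every triple `(j,k,l)` of `Λ_B` satisfies `l ∉ {j, k}`
    (hl : ∀ r : Fin (m+1), (σ r).2.2 ≠ (σ r).1 ∧ (σ r).2.2 ≠ (σ r).2.1) :
    ∀ i : Fin m,
      0 < (Pmat m * gramMatrix σ) i i.castSucc
      ∧ (Pmat m * gramMatrix σ) i (Fin.last m) < 0
      ∧ ∑ j, (if j = Fin.last m then (1:ℝ) else 0) *
          (Pmat m * gramMatrix σ) i j < 0 :=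
  stmt5_general b σ hσ hl
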